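/- Let N be a binary phylogenetic network with a non-temporal labelling having h inrets (reticulations whose two incoming arcs are both vertical). Then there is a network obtained from N by h leaf additions that admits an HGT-consistent labelling extending the given one; in particular L_OR(N) ≤ V_OR(N). -/

import Mathlib

namespace PhyloNet

/-- A binary phylogenetic network, encoded on vertex set `verts ⊆ ℕ`. -/
structure Network where
  verts : Finset ℕ
  arc : ℕ → ℕ → Bool
  root : ℕ
  root_mem : root ∈ verts
  arc_mem : ∀ u v : ℕ, arc u v = true → u ∈ verts ∧ v ∈ verts
  acyclic : ∀ v : ℕ, ¬ Relation.TransGen (fun a b : ℕ => arc a b = true) v v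
  root_indeg : (verts.filter fun u => arc u root = true).card = 0
  root_outdeg : (verts.filter fun w => arc root w = true).card = 1
  nonroot_deg : ∀ v ∈ verts, v ≠ root →
    ((verts.filter fun u => arc u v = true).card = 1 ∧
      (verts.filter fun w => arc v w = true).card = 2) ∨
    ((verts.filter fun u => arc u v = true).card = 2 ∧
      (verts.filter fun w => arc v w = true).card = 1) ∨
    ((verts.filter fun u => arc u v = true).card = 1 ∧
      (verts.filter fun w => arc v w = true).card = 0)

def inDeg (N : Network) (v : ℕ) : ℕ := (N.verts.filter fun u => N.arc u v = true).card

def outDeg (N : Network) (v : ℕ) : ℕ := (N.verts.filter fun w => N.arc v w = true).card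

def IsLeaf (N : Network) (v : ℕ) : Prop := v ∈ N.verts ∧ inDeg N v = 1 ∧ outDeg N v = 0

def IsRet (N : Network) (v : ℕ) : Prop := v ∈ N.verts ∧ inDeg N v = 2

def IsTreeVert (N : Network) (v : ℕ) : Prop := v ∈ N.verts ∧ inDeg N v = 1 ∧ outDeg N v = 2

def IsInternal (N : Network) (v : ℕ) : Prop := v ∈ N.verts ∧ v ≠ N.root ∧ ¬ IsLeaf N v

def IsTree (N : Network) : Prop := ∀ v : ℕ, ¬ IsRet N v

noncomputable def retCount (N : Network) : ℕ := {v : ℕ | IsRet N v}.ncard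

/-- Tree-child: every non-leaf vertex has a child that is a tree vertex or a leaf. -/
def IsTreeChild (N : Network) : Prop :=
  ∀ v ∈ N.verts, ¬ IsLeaf N v → ∃ w : ℕ, N.arc v w = true ∧ (IsTreeVert N w ∨ IsLeaf N w)

/-- An omnian: an internal vertex all of whose children are reticulations. -/
def IsOmnian (N : Network) (v : ℕ) : Prop :=
  IsInternal N v ∧ ∀ w : ℕ, N.arc v w = true → IsRet N w

noncomputable def omnianCount (N : Network) : ℕ := {v : ℕ | IsOmnian N v}.ncard

/-- `N'` is obtained from `N` by adding a leaf to the arc `uv`: the arc is subdivided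
by a fresh vertex `w`, and a fresh leaf `x` is attached to `w`. -/
def IsLeafAdditionOn (N N' : Network) (u v : ℕ) : Prop :=
  N.arc u v = true ∧ ∃ w x : ℕ, w ∉ N.verts ∧ x ∉ N.verts ∧ w ≠ x ∧
    N'.verts = insert w (insert x N.verts) ∧ N'.root = N.root ∧
    ∀ a b : ℕ, (N'.arc a b = true ↔
      ((N.arc a b = true ∧ ¬ (a = u ∧ b = v)) ∨ (a = u ∧ b = w) ∨
        (a = w ∧ b = v) ∨ (a = w ∧ b = x)))

def IsLeafAddition (N N' : Network) : Prop := ∃ u v : ℕ, IsLeafAdditionOn N N' u v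

/-- `N'` is obtained from `N` by adding a leaf to a reticulation arc. -/
def IsRetArcLeafAddition (N N' : Network) : Prop :=
  ∃ u v : ℕ, IsRet N v ∧ IsLeafAdditionOn N N' u v

/-- `P` holds after exactly `k` steps of relation `step` starting from `N`. -/
def ReachableBy (step : Network → Network → Prop) (N : Network) (k : ℕ)
    (P : Network → Prop) : Prop :=
  ∃ M : ℕ → Network, M 0 = N ∧ (∀ i : ℕ, i < k → step (M i) (M (i + 1))) ∧ P (M k)

/-- The minimum number of leaf additions needed to bring `N` into the class `P`. -/
noncomputable def leafAddDist (P : Network → Prop) (N : Network) : ℕ :=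
  sInf {k : ℕ | ReachableBy IsLeafAddition N k P}

noncomputable def LTC (N : Network) : ℕ := leafAddDist IsTreeChild N

/-- Reduction of a cherry (x,y): delete the leaf x and suppress its parent p
(whose own parent is q, gaining the arc q → y). -/
def ReducesCherry (N N' : Network) (x y : ℕ) : Prop :=
  ∃ p q : ℕ, IsLeaf N x ∧ IsLeaf N y ∧ x ≠ y ∧
    N.arc p x = true ∧ N.arc p y = true ∧ N.arc q p = true ∧
    N'.verts = (N.verts.erase x).erase p ∧ N'.root = N.root ∧
    ∀ a b : ℕ, (N'.arc a b = true ↔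
      (N.arc a b = true ∧ a ≠ p ∧ b ≠ p ∧ b ≠ x) ∨ (a = q ∧ b = y))

/-- Reduction of a reticulated cherry (x,y): delete the arc from the parent p_y of y
to the reticulation parent p_x of x, and clean up (suppressing p_x and p_y). -/
def ReducesRetCherry (N N' : Network) (x y : ℕ) : Prop :=
  ∃ px py z q : ℕ, IsLeaf N x ∧ IsLeaf N y ∧ IsRet N px ∧
    N.arc px x = true ∧ N.arc py px = true ∧ N.arc py y = true ∧
    N.arc z px = true ∧ z ≠ py ∧ N.arc q py = true ∧
    N'.verts = (N.verts.erase px).erase py ∧ N'.root = N.root ∧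
    ∀ a b : ℕ, (N'.arc a b = true ↔
      (N.arc a b = true ∧ a ≠ px ∧ a ≠ py ∧ b ≠ px ∧ b ≠ py) ∨
        (a = z ∧ b = x) ∨ (a = q ∧ b = y))

def CherryStep (N N' : Network) : Prop :=
  ∃ x y : ℕ, ReducesCherry N N' x y ∨ ReducesRetCherry N N' x y

/-- A network consisting of the root and a single leaf. -/
def IsSingleLeaf (N : Network) : Prop := ∃ x : ℕ, x ≠ N.root ∧ N.verts = {N.root, x}

/-- Orchard: reducible to a single leaf by cherry and reticulated cherry reductions. -/
def IsOrchard (N : Network) : Prop :=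
  ∃ N' : Network, Relation.ReflTransGen CherryStep N N' ∧ IsSingleLeaf N'

noncomputable def LOR (N : Network) : ℕ := leafAddDist IsOrchard N

/-- Tree-based: there is a spanning tree (a choice of one incoming arc for each
non-root vertex) all of whose leaves are leaves of `N`. -/
def IsTreeBased (N : Network) : Prop :=
  ∃ T : ℕ → ℕ → Bool, (∀ u v : ℕ, T u v = true → N.arc u v = true) ∧
    (∀ v ∈ N.verts, v ≠ N.root → (N.verts.filter fun u => T u v = true).card = 1) ∧
    (∀ v ∈ N.verts, ¬ IsLeaf N v → ∃ w : ℕ, T v w = true)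

noncomputable def LTB (N : Network) : ℕ := leafAddDist IsTreeBased N

/-- A zig-zag trail: a nonempty duplicate-free sequence of arcs in which
consecutive arcs share a tail or share a head. -/
def IsZigZag (N : Network) (s : List (ℕ × ℕ)) : Prop :=
  s ≠ [] ∧ s.Nodup ∧ (∀ a ∈ s, N.arc a.1 a.2 = true) ∧
    List.Chain' (fun a b : ℕ × ℕ => a.1 = b.1 ∨ a.2 = b.2) s

def IsMaximalZigZag (N : Network) (s : List (ℕ × ℕ)) : Prop :=
  IsZigZag N s ∧ ∀ t : List (ℕ × ℕ), IsZigZag N t → s.Sublist t → t.length = s.length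

/-- A W-fence: a maximal zig-zag trail of even length whose two end-arc tails
are both reticulations. -/
def IsWFence (N : Network) (s : List (ℕ × ℕ)) : Prop :=
  IsMaximalZigZag N s ∧ s.length % 2 = 0 ∧ 2 ≤ s.length ∧
    IsRet N (s.headD (0, 0)).1 ∧ IsRet N (s.getLastD (0, 0)).1

/-- An N-fence: a maximal zig-zag trail of odd length exactly one of whose
end-arc tails is a reticulation. -/
def IsNFence (N : Network) (s : List (ℕ × ℕ)) : Prop :=
  IsMaximalZigZag N s ∧ s.length % 2 = 1 ∧
    Xor' (IsRet N (s.headD (0, 0)).1) (IsRet N (s.getLastD (0, 0)).1)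

/-- A zig-zag decomposition: a set of maximal zig-zag trails partitioning the
non-root arcs of the network. -/
def IsZigZagDecomposition (N : Network) (D : Set (List (ℕ × ℕ))) : Prop :=
  (∀ s ∈ D, IsMaximalZigZag N s) ∧
  (∀ s ∈ D, ∀ p ∈ s, p.1 ≠ N.root) ∧
  (∀ a b : ℕ, N.arc a b = true → a ≠ N.root → ∃! s : List (ℕ × ℕ), s ∈ D ∧ (a, b) ∈ s)

/-- A cherry shape: two arcs with a common tail. -/
def IsCherryShape (N : Network) (s : Set (ℕ × ℕ)) : Prop :=
  ∃ p x y : ℕ, x ≠ y ∧ N.arc p x = true ∧ N.arc p y = true ∧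
    s = {(p, x), (p, y)}

/-- A reticulated cherry shape: arcs p_x x, p_y p_x, p_y y where p_x is a reticulation;
its middle arc is p_y p_x. -/
def IsRetCherryShape (N : Network) (s : Set (ℕ × ℕ)) : Prop :=
  ∃ x y px py : ℕ, IsRet N px ∧ N.arc px x = true ∧ N.arc py px = true ∧
    N.arc py y = true ∧ y ≠ px ∧ s = {(px, x), (py, px), (py, y)}

/-- `s` is a reticulated cherry shape with middle arc `(u, r)`. -/
def IsMiddleArcOf (N : Network) (s : Set (ℕ × ℕ)) (u r : ℕ) : Prop :=
  ∃ x y : ℕ, IsRet N r ∧ N.arc r x = true ∧ N.arc u r = true ∧ N.arc u y = true ∧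
    y ≠ r ∧ s = {(r, x), (u, r), (u, y)}

/-- A cherry cover: cherry shapes and reticulated cherry shapes covering every
non-root arc exactly once. -/
def IsCherryCover (N : Network) (P : Set (Set (ℕ × ℕ))) : Prop :=
  (∀ s ∈ P, IsCherryShape N s ∨ IsRetCherryShape N s) ∧
  (∀ a b : ℕ, N.arc a b = true → a ≠ N.root →
    ∃! s : Set (ℕ × ℕ), s ∈ P ∧ (a, b) ∈ s)

/-- The internal vertices of a shape are the tails of its arcs. -/
def shapeInternals (s : Set (ℕ × ℕ)) : Set ℕ := {p : ℕ | ∃ x : ℕ, (p, x) ∈ s}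

/-- The endpoints of a shape: heads of its arcs that are not tails of its arcs. -/
def shapeEndpoints (s : Set (ℕ × ℕ)) : Set ℕ :=
  {x : ℕ | (∃ p : ℕ, (p, x) ∈ s) ∧ ∀ y : ℕ, (x, y) ∉ s}

/-- In the auxiliary graph, shape `B` is directly above shape `C` if an internal
vertex of `C` is an endpoint of `B`. -/
def DirectlyAbove (B C : Set (ℕ × ℕ)) : Prop :=
  ∃ v : ℕ, v ∈ shapeEndpoints B ∧ v ∈ shapeInternals C

/-- The auxiliary graph of the cherry cover `P` contains a directed cycle. -/
def HasCyclicAux (P : Set (Set (ℕ × ℕ))) : Prop :=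
  ∃ s ∈ P, Relation.TransGen
    (fun B C : Set (ℕ × ℕ) => B ∈ P ∧ C ∈ P ∧ DirectlyAbove B C) s s

/-- A non-temporal labelling of `N`. -/
def IsNonTemporal (N : Network) (t : ℕ → ℝ) : Prop :=
  (∀ u v : ℕ, N.arc u v = true → t u ≤ t v) ∧
  (∀ u v : ℕ, N.arc u v = true → t u = t v → IsRet N v) ∧
  (∀ u : ℕ, IsInternal N u → ∃ v : ℕ, N.arc u v = true ∧ t u < t v) ∧
  (∀ r u v : ℕ, IsRet N r → N.arc u r = true → N.arc v r = true → u ≠ v →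
    ¬ (t u = t r ∧ t v = t r))

/-- An inret: a reticulation with no incoming horizontal arc
(i.e. both incoming arcs vertical). -/
def Inret (N : Network) (t : ℕ → ℝ) (r : ℕ) : Prop :=
  IsRet N r ∧ ∀ u : ℕ, N.arc u r = true → t u ≠ t r

noncomputable def inretCount (N : Network) (t : ℕ → ℝ) : ℕ := {r : ℕ | Inret N t r}.ncard

/-- HGT-consistent labelling: a non-temporal labelling in which every reticulation
has exactly one incoming horizontal arc. -/
def IsHGTConsistent (N : Network) (t : ℕ → ℝ) : Prop :=
  IsNonTemporal N t ∧ ∀ r : ℕ, IsRet N r → ∃! u : ℕ, N.arc u r = true ∧ t u = t r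

/-- V_OR: the minimum number of inrets over all non-temporal labellings. -/
noncomputable def VOR (N : Network) : ℕ :=
  sInf {k : ℕ | ∃ t : ℕ → ℝ, IsNonTemporal N t ∧ inretCount N t = k}

/-- The network `N` is the result of the vertex-cover reduction applied to `G`. -/
def IsVCReduction {α : Type} [Fintype α] [DecidableEq α] (G : SimpleGraph α)
    (N : Network) : Prop :=
  ∃ (R W L M : α → ℕ → ℕ) (P : α → ℕ) (S : ℕ → ℕ) (rho : ℕ)
    (e : ℕ → α) (pi tau : α → α → ℕ),
    (∀ v : α, ∃! i : ℕ, 1 ≤ i ∧ i ≤ Fintype.card α ∧ e i = v) ∧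
    (∀ v u : α, G.Adj v u → pi v u ∈ ({1, 2, 3} : Set ℕ)) ∧
    (∀ v u u' : α, G.Adj v u → G.Adj v u' → pi v u = pi v u' → u = u') ∧
    (∀ v u : α, G.Adj v u → tau v u ∈ ({5, 6, 7} : Set ℕ)) ∧
    (∀ v u u' : α, G.Adj v u → G.Adj v u' → tau v u = tau v u' → u = u') ∧
    Function.Injective
      (fun z : (α × Fin 8) ⊕ (α × Fin 7) ⊕ (α × Fin 5) ⊕ (α × Fin 4) ⊕ α ⊕
          (Fin (Fintype.card α - 1)) ⊕ Unit =>
        match z with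
        | Sum.inl (v, i) => R v i.1
        | Sum.inr (Sum.inl (v, i)) => W v (i.1 + 1)
        | Sum.inr (Sum.inr (Sum.inl (v, i))) => L v (i.1 + 1)
        | Sum.inr (Sum.inr (Sum.inr (Sum.inl (v, i)))) => M v (i.1 + 1)
        | Sum.inr (Sum.inr (Sum.inr (Sum.inr (Sum.inl v)))) => P v
        | Sum.inr (Sum.inr (Sum.inr (Sum.inr (Sum.inr (Sum.inl i))))) => S (i.1 + 1)
        | Sum.inr (Sum.inr (Sum.inr (Sum.inr (Sum.inr (Sum.inr _))))) => rho) ∧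
    N.root = rho ∧
    (∀ x : ℕ, x ∈ N.verts ↔
      (∃ v i, i ≤ 7 ∧ x = R v i) ∨ (∃ v i, 1 ≤ i ∧ i ≤ 7 ∧ x = W v i) ∨
      (∃ v i, 1 ≤ i ∧ i ≤ 5 ∧ x = L v i) ∨ (∃ v i, 1 ≤ i ∧ i ≤ 4 ∧ x = M v i) ∨
      (∃ v, x = P v) ∨ (∃ i, 1 ≤ i ∧ i ≤ Fintype.card α - 1 ∧ x = S i) ∨ x = rho) ∧
    (∀ a b : ℕ, N.arc a b = true ↔
      (a = rho ∧ b = S 1) ∨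
      (∃ i, 1 ≤ i ∧ i ≤ Fintype.card α - 2 ∧ a = S i ∧ b = S (i + 1)) ∨
      (∃ i, 1 ≤ i ∧ i ≤ Fintype.card α - 1 ∧ a = S i ∧ b = P (e i)) ∨
      (a = S (Fintype.card α - 1) ∧ b = P (e (Fintype.card α))) ∨
      (∃ v, a = P v ∧ (b = M v 4 ∨ b = W v 7)) ∨
      (∃ v, a = M v 4 ∧ (b = M v 3 ∨ b = R v 0)) ∨
      (∃ v, a = M v 3 ∧ (b = M v 2 ∨ b = W v 6)) ∨
      (∃ v, a = M v 2 ∧ (b = M v 1 ∨ b = W v 5)) ∨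
      (∃ v, a = M v 1 ∧ (b = R v 0 ∨ b = W v 4)) ∨
      (∃ v, a = R v 0 ∧ b = R v 1) ∨
      (∃ v i, 1 ≤ i ∧ i ≤ 6 ∧ a = W v i ∧ (b = R v i ∨ b = R v (i + 1))) ∨
      (∃ v, a = W v 7 ∧ (b = R v 7 ∨ b = L v 5)) ∨
      (∃ v i, 1 ≤ i ∧ i ≤ 4 ∧ a = R v i ∧ b = L v i) ∨
      (∃ u v, G.Adj u v ∧ a = R u (tau u v) ∧ b = W v (pi v u)))

/-!
Let `r` be an inret with (vertical) in-arc `u r`. Subdividing `u r` by `w` and hanging a leaf `x`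
from `w`, with `t w = t r` and `t x = t r + 1`, keeps the labelling non-temporal and makes `w r`
the unique horizontal in-arc of `r`, while no other vertex changes its in-arcs or labels; so each
leaf addition removes exactly one inret, and after `h` of them the labelling is HGT-consistent.

For `L_OR ≤ V_OR`, apply this to a labelling with `V_OR(N)` inrets and show that HGT-consistent
networks are orchard, by induction on the number of vertices. A tree vertex `u` carrying the
largest label among non-leaf vertices has a child with a larger label, necessarily a leaf `y`.
Its other child is either a leaf, giving a cherry, or a reticulation entered horizontally from
`u`, whose child again has a larger label and so is a leaf `x`, giving a reticulated cherry
`(x, y)`. Reducing it keeps the labelling HGT-consistent, since each arc the reduction creates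
bypasses a strictly increasing path into a leaf.
-/

open Finset Relation

theorem _root_.Relation.not_transGen_self_of_lex {α β : Type*} {R : α → α → Prop}
    {S : β → β → Prop} (f : α → β) (g : α → ℕ) (hS : ∀ b, ¬ TransGen S b b)
    (h : ∀ a b, R a b → TransGen S (f a) (f b) ∨ f a = f b ∧ g a < g b) (a : α) :
    ¬ TransGen R a a := by
  have key : ∀ a b, TransGen R a b → TransGen S (f a) (f b) ∨ f a = f b ∧ g a < g b := by
    intro a b hab
    induction hab with
    | single hab => exact h _ _ hab
    | tail _ hbc ih =>
      rcases ih, h _ _ hbc with ⟨hab | ⟨hab, hlt⟩, hbc | ⟨hbc, hlt'⟩⟩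
      · exact .inl (hab.trans hbc)
      · exact .inl (hbc ▸ hab)
      · exact .inl (hab ▸ hbc)
      · exact .inr ⟨hab.trans hbc, hlt.trans hlt'⟩
  intro haa
  rcases key a a haa with h | h
  exacts [hS _ h, lt_irrefl _ h.2]

theorem _root_.Finset.eq_or_eq_of_card_eq_two {α : Type*} {s : Finset α} (hs : #s = 2)
    {a b c : α} (ha : a ∈ s) (hb : b ∈ s) (hab : a ≠ b) (hc : c ∈ s) : c = a ∨ c = b := by
  classical
  obtain ⟨x, y, -, rfl⟩ := card_eq_two.mp hs
  simp only [mem_insert, mem_singleton] at ha hb hc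
  grind

theorem _root_.Finset.card_insert_erase {α : Type*} [DecidableEq α] {s : Finset α} {a b : α}
    (ha : a ∈ s) (hb : b ∉ s) : #(insert b (s.erase a)) = #s := by
  rw [card_insert_of_notMem fun h => hb (mem_of_mem_erase h), card_erase_add_one ha]

namespace Network

variable (N : Network) {u v : ℕ}

lemma mem_of_arc_left (h : N.arc u v = true) : u ∈ N.verts := (N.arc_mem u v h).1

lemma mem_of_arc_right (h : N.arc u v = true) : v ∈ N.verts := (N.arc_mem u v h).2

lemma ne_of_arc (h : N.arc u v = true) : u ≠ v := by
  rintro rfl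
  exact N.acyclic u (.single h)

lemma ne_root_of_arc (h : N.arc u v = true) : v ≠ N.root := by
  rintro rfl
  have := N.root_indeg
  rw [card_eq_zero, filter_eq_empty_iff] at this
  exact this (N.mem_of_arc_left h) h

lemma isTreeVert_or_isRet_or_isLeaf (hv : v ∈ N.verts) (hne : v ≠ N.root) :
    IsTreeVert N v ∨ IsRet N v ∨ IsLeaf N v := by
  rcases N.nonroot_deg v hv hne with h | h | h
  exacts [.inl ⟨hv, h⟩, .inr (.inl ⟨hv, h.1⟩), .inr (.inr ⟨hv, h⟩)]

lemma exists_parent (hv : v ∈ N.verts) (hne : v ≠ N.root) : ∃ u, N.arc u v = true := by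
  have : 0 < inDeg N v := by rcases N.nonroot_deg v hv hne with h | h | h <;> simp [inDeg, h.1]
  obtain ⟨u, hu⟩ := card_pos.mp this
  exact ⟨u, (mem_filter.mp hu).2⟩

lemma exists_child (hv : v ∈ N.verts) (hv' : ¬ IsLeaf N v) : ∃ w, N.arc v w = true := by
  have : 0 < outDeg N v := by
    by_cases hr : v = N.root
    · simp [outDeg, hr, N.root_outdeg]
    · rcases N.nonroot_deg v hv hr with h | h | h
      · simp [outDeg, h.2]
      · simp [outDeg, h.2]
      · exact absurd ⟨hv, h⟩ hv'
  obtain ⟨w, hw⟩ := card_pos.mp this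
  exact ⟨w, (mem_filter.mp hw).2⟩

lemma wellFounded_transGen :
    WellFounded fun a b : N.verts => TransGen (fun a b => N.arc a b = true) a b :=
  have : IsTrans N.verts fun a b => TransGen (fun a b => N.arc a b = true) a b :=
    ⟨fun _ _ _ => TransGen.trans⟩
  have : Std.Irrefl fun a b : N.verts => TransGen (fun a b => N.arc a b = true) a b :=
    ⟨fun a => N.acyclic a⟩
  Finite.wellFounded_of_trans_of_irrefl _

lemma reflTransGen_root (hv : v ∈ N.verts) :
    ReflTransGen (fun a b => N.arc a b = true) N.root v := by
  refine N.wellFounded_transGen.induction (C := fun v => ReflTransGen _ N.root v.1)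
    ⟨v, hv⟩ fun v ih => ?_
  by_cases hr : v.1 = N.root
  · rw [hr]
  obtain ⟨u, hu⟩ := N.exists_parent v.2 hr
  exact (ih ⟨u, N.mem_of_arc_left hu⟩ (.single hu)).tail hu

end Network

section Vertices

variable {N : Network} {a b c u v : ℕ}

lemma inDeg_root : inDeg N N.root = 0 := N.root_indeg

lemma IsLeaf.not_arc (hv : IsLeaf N v) (w : ℕ) : N.arc v w ≠ true := fun h =>
  (card_pos.mpr ⟨w, mem_filter.mpr ⟨N.mem_of_arc_right h, h⟩⟩).ne' hv.2.2

lemma not_isLeaf_of_arc (h : N.arc u v = true) : ¬ IsLeaf N u := fun hu => hu.not_arc v h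

lemma IsLeaf.ne_root (hv : IsLeaf N v) : v ≠ N.root := by
  rintro rfl
  simp [IsLeaf, inDeg_root] at hv

lemma IsRet.ne_root (hv : IsRet N v) : v ≠ N.root := by
  rintro rfl
  simp [IsRet, inDeg_root] at hv

lemma IsRet.not_isLeaf (hv : IsRet N v) : ¬ IsLeaf N v := fun hl => by
  simpa [hl.2.1] using hv.2

lemma IsRet.outDeg_eq_one (hv : IsRet N v) : outDeg N v = 1 := by
  have := hv.2
  rcases N.nonroot_deg v hv.1 hv.ne_root with h | h | h
  exacts [by simp_all [inDeg], h.2, by simp_all [inDeg]]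

lemma IsLeaf.not_isRet (hv : IsLeaf N v) : ¬ IsRet N v := fun h => h.not_isLeaf hv

lemma IsRet.isInternal (hv : IsRet N v) : IsInternal N v := ⟨hv.1, hv.ne_root, hv.not_isLeaf⟩

lemma IsTreeVert.isInternal (hv : IsTreeVert N v) : IsInternal N v := by
  refine ⟨hv.1, ?_, fun hl => by have := hv.2.2; have := hl.2.2; omega⟩
  rintro rfl
  simp [IsTreeVert, inDeg_root] at hv

lemma IsTreeVert.not_isRet (hv : IsTreeVert N v) : ¬ IsRet N v := fun h => by
  simpa [hv.2.1] using h.2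

lemma eq_of_inDeg_eq_one (h : inDeg N v = 1) (ha : N.arc a v = true) (hb : N.arc b v = true) :
    a = b :=
  card_le_one.mp h.le a (mem_filter.mpr ⟨N.mem_of_arc_left ha, ha⟩) b
    (mem_filter.mpr ⟨N.mem_of_arc_left hb, hb⟩)

lemma eq_of_outDeg_eq_one (h : outDeg N v = 1) (ha : N.arc v a = true)
    (hb : N.arc v b = true) : a = b :=
  card_le_one.mp h.le a (mem_filter.mpr ⟨N.mem_of_arc_right ha, ha⟩) b
    (mem_filter.mpr ⟨N.mem_of_arc_right hb, hb⟩)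

lemma eq_or_eq_of_inDeg_eq_two (h : inDeg N v = 2) (ha : N.arc a v = true)
    (hb : N.arc b v = true) (hab : a ≠ b) (hc : N.arc c v = true) : c = a ∨ c = b :=
  eq_or_eq_of_card_eq_two h (mem_filter.mpr ⟨N.mem_of_arc_left ha, ha⟩)
    (mem_filter.mpr ⟨N.mem_of_arc_left hb, hb⟩) hab (mem_filter.mpr ⟨N.mem_of_arc_left hc, hc⟩)

lemma eq_or_eq_of_outDeg_eq_two (h : outDeg N v = 2) (ha : N.arc v a = true)
    (hb : N.arc v b = true) (hab : a ≠ b) (hc : N.arc v c = true) : c = a ∨ c = b :=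
  eq_or_eq_of_card_eq_two h (mem_filter.mpr ⟨N.mem_of_arc_right ha, ha⟩)
    (mem_filter.mpr ⟨N.mem_of_arc_right hb, hb⟩) hab (mem_filter.mpr ⟨N.mem_of_arc_right hc, hc⟩)

lemma IsRet.exists_parent_ne (hv : IsRet N v) (a : ℕ) :
    ∃ b, b ≠ a ∧ N.arc b v = true := by
  obtain ⟨b, hb, hba⟩ := exists_mem_ne (hv.2.symm ▸ one_lt_two : 1 < inDeg N v) a
  exact ⟨b, hba, (mem_filter.mp hb).2⟩

lemma isTreeVert_of_two_children (hqp : N.arc u v = true) (ha : N.arc v a = true)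
    (hb : N.arc v b = true) (hab : a ≠ b) : IsTreeVert N v := by
  have h2 : 2 ≤ outDeg N v := by
    rw [← card_pair hab]
    exact card_le_card fun c hc => by
      rcases mem_insert.mp hc with rfl | hc
      · exact mem_filter.mpr ⟨N.mem_of_arc_right ha, ha⟩
      · rw [mem_singleton.mp hc]; exact mem_filter.mpr ⟨N.mem_of_arc_right hb, hb⟩
  rcases N.nonroot_deg v (N.mem_of_arc_left ha) (N.ne_root_of_arc hqp) with h | h | h
  · exact ⟨N.mem_of_arc_left ha, h⟩
  all_goals simp [outDeg, h.2] at h2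

lemma not_isRet_of_forall_arc_eq (h : ∀ a, N.arc a v = true → a = u) :
    ¬ IsRet N v := fun hv => by
  obtain ⟨a, b, hab, hs⟩ := card_eq_two.mp hv.2
  have ha : a ∈ N.verts.filter fun a => N.arc a v = true := hs ▸ mem_insert_self a {b}
  have hb : b ∈ N.verts.filter fun a => N.arc a v = true :=
    hs ▸ mem_insert_of_mem (mem_singleton_self b)
  exact hab ((h a (mem_filter.mp ha).2).trans (h b (mem_filter.mp hb).2).symm)

lemma isLeaf_of_forall_not_arc (hv : v ∈ N.verts) (h : ∀ b, N.arc v b ≠ true) :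
    IsLeaf N v := by
  by_contra hl
  obtain ⟨b, hb⟩ := N.exists_child hv hl
  exact h b hb

end Vertices

namespace IsNonTemporal

variable {N : Network} {t : ℕ → ℝ} (ht : IsNonTemporal N t) {u v w : ℕ}
include ht

lemma le (h : N.arc u v = true) : t u ≤ t v := ht.1 u v h

lemma isRet_of_eq (h : N.arc u v = true) (heq : t u = t v) : IsRet N v := ht.2.1 u v h heq

lemma exists_lt (hv : IsInternal N v) : ∃ w, N.arc v w = true ∧ t v < t w := ht.2.2.1 v hv

lemma not_eq_and_eq (hv : IsRet N v) (hu : N.arc u v = true) (hw : N.arc w v = true)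
    (huw : u ≠ w) : ¬ (t u = t v ∧ t w = t v) :=
  ht.2.2.2 v u w hv hu hw huw

lemma lt_of_not_isRet (h : N.arc u v = true) (hv : ¬ IsRet N v) : t u < t v :=
  (ht.le h).lt_of_ne fun heq => hv (ht.isRet_of_eq h heq)

lemma root_le (hv : v ∈ N.verts) : t N.root ≤ t v := by
  have hreach := N.reflTransGen_root hv
  clear hv
  induction hreach with
  | refl => rfl
  | tail _ h ih => exact ih.trans (ht.le h)

end IsNonTemporal

lemma finite_setOf_inret (N : Network) (t : ℕ → ℝ) : {v | Inret N t v}.Finite :=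
  N.verts.finite_toSet.subset fun _ hv => hv.1.1

lemma isRet_iff_of_inDeg_eq {N N' : Network} {v : ℕ} (hv : v ∈ N.verts) (hv' : v ∈ N'.verts)
    (h : inDeg N' v = inDeg N v) : IsRet N' v ↔ IsRet N v := by
  simp [IsRet, h, hv, hv']

lemma isLeaf_iff_of_deg_eq {N N' : Network} {v : ℕ} (hv : v ∈ N.verts) (hv' : v ∈ N'.verts)
    (hin : inDeg N' v = inDeg N v) (hout : outDeg N' v = outDeg N v) :
    IsLeaf N' v ↔ IsLeaf N v := by
  simp [IsLeaf, hin, hout, hv, hv']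

def Network.ofDegEq (N : Network) (V : Finset ℕ) (A : ℕ → ℕ → Bool) (root_mem : N.root ∈ V)
    (arc_mem : ∀ a b, A a b = true → a ∈ V ∧ b ∈ V)
    (acyclic : ∀ v, ¬ TransGen (fun a b => A a b = true) v v)
    (inDeg_eq : ∀ v ∈ V, v ∈ N.verts → #(V.filter fun a => A a v = true) = inDeg N v)
    (outDeg_eq : ∀ v ∈ V, v ∈ N.verts → #(V.filter fun b => A v b = true) = outDeg N v)
    (new_deg : ∀ v ∈ V, v ∉ N.verts →
      (#(V.filter fun a => A a v = true) = 1 ∧ #(V.filter fun b => A v b = true) = 2) ∨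
      (#(V.filter fun a => A a v = true) = 2 ∧ #(V.filter fun b => A v b = true) = 1) ∨
      (#(V.filter fun a => A a v = true) = 1 ∧ #(V.filter fun b => A v b = true) = 0)) :
    Network where
  verts := V
  arc := A
  root := N.root
  root_mem := root_mem
  arc_mem := arc_mem
  acyclic := acyclic
  root_indeg := (inDeg_eq _ root_mem N.root_mem).trans N.root_indeg
  root_outdeg := (outDeg_eq _ root_mem N.root_mem).trans N.root_outdeg
  nonroot_deg v hv hne := by
    by_cases hvN : v ∈ N.verts
    · rw [inDeg_eq v hv hvN, outDeg_eq v hv hvN]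
      exact N.nonroot_deg v hvN hne
    · exact new_deg v hv hvN

section LeafAddition

def addLeafArc (N : Network) (u r w x a b : ℕ) : Bool :=
  decide ((N.arc a b = true ∧ ¬ (a = u ∧ b = r)) ∨ (a = u ∧ b = w) ∨ (a = w ∧ b = r) ∨
    (a = w ∧ b = x))

variable {N : Network} {u r w x : ℕ}

@[simp] lemma addLeafArc_eq_true {a b : ℕ} :
    addLeafArc N u r w x a b = true ↔ (N.arc a b = true ∧ ¬ (a = u ∧ b = r)) ∨
      (a = u ∧ b = w) ∨ (a = w ∧ b = r) ∨ (a = w ∧ b = x) :=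
  decide_eq_true_iff

/-- Collapsing `w` and `x` onto `r` maps every new arc onto an old arc, except for the two arcs
leaving `w`, which become loops at `r` but leave `w`. -/
lemma addLeafArc_acyclic (hur : N.arc u r = true) (hw : w ∉ N.verts) (hx : x ∉ N.verts)
    (hwx : w ≠ x) (v : ℕ) :
    ¬ TransGen (fun a b => addLeafArc N u r w x a b = true) v v := by
  refine not_transGen_self_of_lex (fun v => if v = w ∨ v = x then r else v)
    (fun v => if v = w then 0 else 1) N.acyclic (fun a b hab => ?_) v
  have hr := N.mem_of_arc_right hur
  rw [addLeafArc_eq_true] at hab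
  rcases hab with ⟨hab, -⟩ | ⟨ha, hb⟩ | ⟨ha, hb⟩ | ⟨ha, hb⟩
  · have := N.arc_mem a b hab
    grind
  · have := N.mem_of_arc_left hur
    grind
  all_goals grind

lemma card_filter_addLeafArc_in (hur : N.arc u r = true) (hw : w ∉ N.verts) (hx : x ∉ N.verts)
    {v : ℕ} (hv : v ∈ N.verts) :
    #((insert w (insert x N.verts)).filter fun a => addLeafArc N u r w x a v = true) =
      inDeg N v := by
  have := N.arc_mem
  by_cases hvr : v = r
  · subst hvr
    rw [inDeg, ← card_insert_erase (s := N.verts.filter _) (mem_filter.mpr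
      ⟨N.mem_of_arc_left hur, hur⟩) (b := w) (by simp [hw])]
    congr 1
    ext a
    simp only [mem_filter, mem_insert, mem_erase, addLeafArc_eq_true]
    grind
  · congr 1
    ext a
    simp only [mem_filter, mem_insert, addLeafArc_eq_true]
    grind

lemma card_filter_addLeafArc_out (hur : N.arc u r = true) (hw : w ∉ N.verts) {v : ℕ}
    (hv : v ∈ N.verts) :
    #((insert w (insert x N.verts)).filter fun b => addLeafArc N u r w x v b = true) =
      outDeg N v := by
  have := N.arc_mem
  by_cases hvu : v = u
  · subst hvu
    rw [outDeg, ← card_insert_erase (s := N.verts.filter _) (mem_filter.mpr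
      ⟨N.mem_of_arc_right hur, hur⟩) (b := w) (by simp [hw])]
    congr 1
    ext a
    simp only [mem_filter, mem_insert, mem_erase, addLeafArc_eq_true]
    grind
  · congr 1
    ext a
    simp only [mem_filter, mem_insert, addLeafArc_eq_true]
    grind

def addLeaf (hur : N.arc u r = true) (hw : w ∉ N.verts) (hx : x ∉ N.verts) (hwx : w ≠ x) :
    Network :=
  N.ofDegEq (insert w (insert x N.verts)) (addLeafArc N u r w x) (by simp [N.root_mem])
    (fun a b hab => by
      have := N.arc_mem a b
      have := N.arc_mem u r hur
      simp only [addLeafArc_eq_true] at hab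
      simp only [mem_insert]
      grind)
    (addLeafArc_acyclic hur hw hx hwx)
    (fun _ _ hv => card_filter_addLeafArc_in hur hw hx hv)
    (fun _ _ hv => card_filter_addLeafArc_out hur hw hv)
    (fun v hv hvN => by
      have := N.arc_mem
      have := N.arc_mem u r hur
      obtain rfl | rfl : v = w ∨ v = x := by simpa [hvN] using hv
      · refine .inl ⟨card_eq_one.mpr ⟨u, ?_⟩, card_eq_two.mpr ⟨r, x, by grind, ?_⟩⟩ <;>
        · ext a
          simp only [mem_filter, mem_insert, mem_singleton, addLeafArc_eq_true]
          grind
      · refine .inr (.inr ⟨card_eq_one.mpr ⟨w, ?_⟩, card_eq_zero.mpr ?_⟩) <;>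
        · ext a
          simp only [mem_filter, mem_insert, mem_singleton, addLeafArc_eq_true,
            notMem_empty, iff_false]
          grind)

variable (hur : N.arc u r = true) (hw : w ∉ N.verts) (hx : x ∉ N.verts) (hwx : w ≠ x)

@[simp] lemma addLeaf_verts : (addLeaf hur hw hx hwx).verts = insert w (insert x N.verts) := rfl

@[simp] lemma addLeaf_arc {a b : ℕ} : (addLeaf hur hw hx hwx).arc a b = true ↔
    (N.arc a b = true ∧ ¬ (a = u ∧ b = r)) ∨ (a = u ∧ b = w) ∨ (a = w ∧ b = r) ∨
      (a = w ∧ b = x) :=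
  addLeafArc_eq_true

lemma addLeaf_isLeafAdditionOn : IsLeafAdditionOn N (addLeaf hur hw hx hwx) u r :=
  ⟨hur, w, x, hw, hx, hwx, rfl, rfl, fun _ _ => addLeafArc_eq_true⟩

lemma isRet_addLeaf_iff {v : ℕ} (hv : v ∈ N.verts) : IsRet (addLeaf hur hw hx hwx) v ↔ IsRet N v :=
  isRet_iff_of_inDeg_eq hv (by simp [hv]) (card_filter_addLeafArc_in hur hw hx hv)

lemma isLeaf_addLeaf_iff {v : ℕ} (hv : v ∈ N.verts) :
    IsLeaf (addLeaf hur hw hx hwx) v ↔ IsLeaf N v :=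
  isLeaf_iff_of_deg_eq hv (by simp [hv]) (card_filter_addLeafArc_in hur hw hx hv)
    (card_filter_addLeafArc_out hur hw hv)

lemma mem_of_isRet_addLeaf {v : ℕ} (hv : IsRet (addLeaf hur hw hx hwx) v) : v ∈ N.verts := by
  have := N.arc_mem
  have := N.arc_mem u r hur
  obtain rfl | rfl | hv' : v = w ∨ v = x ∨ v ∈ N.verts := by simpa using hv.1
  · exact absurd hv (not_isRet_of_forall_arc_eq (u := u) fun a ha => by simp at ha; grind)
  · exact absurd hv (not_isRet_of_forall_arc_eq (u := w) fun a ha => by simp at ha; grind)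
  · exact hv'

lemma addLeaf_arc_of_ne {v a : ℕ} (hv : v ∈ N.verts) (hvr : v ≠ r) :
    (addLeaf hur hw hx hwx).arc a v = true ↔ N.arc a v = true := by
  simp only [addLeaf_arc]
  grind

lemma addLeaf_arc_right {a : ℕ} :
    (addLeaf hur hw hx hwx).arc a r = true ↔ N.arc a r = true ∧ a ≠ u ∨ a = w := by
  have := N.mem_of_arc_right hur
  simp only [addLeaf_arc]
  grind

def addLeafLabel (t : ℕ → ℝ) (r w x : ℕ) : ℕ → ℝ :=
  Function.update (Function.update t w (t r)) x (t r + 1)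

section Label

variable {t : ℕ → ℝ} {v : ℕ}

lemma addLeafLabel_of_mem (hw : w ∉ N.verts) (hx : x ∉ N.verts) (hv : v ∈ N.verts) :
    addLeafLabel t r w x v = t v := by
  rw [addLeafLabel, Function.update_of_ne (ne_of_mem_of_not_mem hv hx),
    Function.update_of_ne (ne_of_mem_of_not_mem hv hw)]

lemma addLeafLabel_w (hwx : w ≠ x) : addLeafLabel t r w x w = t r := by
  simp [addLeafLabel, hwx]

lemma addLeafLabel_x : addLeafLabel t r w x x = t r + 1 := by
  simp [addLeafLabel]

lemma addLeafLabel_le_of_arc (ht : IsNonTemporal N t) (hin : Inret N t r) {a b : ℕ}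
    (hab : (addLeaf hur hw hx hwx).arc a b = true) :
    addLeafLabel t r w x a ≤ addLeafLabel t r w x b ∧
      (addLeafLabel t r w x a = addLeafLabel t r w x b → IsRet (addLeaf hur hw hx hwx) b) := by
  have hlt : t u < t r := (ht.le hur).lt_of_ne (hin.2 u hur)
  rw [addLeaf_arc] at hab
  rcases hab with ⟨hab, -⟩ | ⟨rfl, rfl⟩ | ⟨rfl, rfl⟩ | ⟨rfl, rfl⟩
  · have hb := N.mem_of_arc_right hab
    rw [addLeafLabel_of_mem hw hx (N.mem_of_arc_left hab), addLeafLabel_of_mem hw hx hb,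
      isRet_addLeaf_iff hur hw hx hwx hb]
    exact ⟨ht.le hab, ht.isRet_of_eq hab⟩
  · rw [addLeafLabel_of_mem hw hx (N.mem_of_arc_left hur), addLeafLabel_w hwx]
    exact ⟨hlt.le, fun h => absurd h hlt.ne⟩
  · rw [addLeafLabel_w hwx, isRet_addLeaf_iff hur hw hx hwx (N.mem_of_arc_right hur),
      addLeafLabel_of_mem hw hx (N.mem_of_arc_right hur)]
    exact ⟨le_rfl, fun _ => hin.1⟩
  · rw [addLeafLabel_w hwx, addLeafLabel_x]
    exact ⟨by linarith, fun h => by linarith⟩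

lemma isNonTemporal_addLeaf (ht : IsNonTemporal N t) (hin : Inret N t r) :
    IsNonTemporal (addLeaf hur hw hx hwx) (addLeafLabel t r w x) := by
  have hs : ∀ v ∈ N.verts, addLeafLabel t r w x v = t v := fun v hv =>
    addLeafLabel_of_mem hw hx hv
  refine ⟨fun a b hab => (addLeafLabel_le_of_arc hur hw hx hwx ht hin hab).1,
    fun a b hab => (addLeafLabel_le_of_arc hur hw hx hwx ht hin hab).2,
    fun v hv => ?_, fun v a b hv ha hb hab => ?_⟩
  · obtain ⟨hvA, hroot, hleaf⟩ := hv
    obtain rfl | rfl | hvN : v = w ∨ v = x ∨ v ∈ N.verts := by simpa using hvA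
    · exact ⟨x, by simp, by rw [addLeafLabel_w hwx, addLeafLabel_x]; linarith⟩
    · refine absurd (isLeaf_of_forall_not_arc hvA fun b hb => ?_) hleaf
      have := N.arc_mem
      simp only [addLeaf_arc] at hb
      grind
    by_cases hvu : v = u
    · subst hvu
      refine ⟨w, by simp, ?_⟩
      rw [hs _ hvN, addLeafLabel_w hwx]
      exact (ht.le hur).lt_of_ne (hin.2 v hur)
    obtain ⟨c, hc, hlt⟩ := ht.exists_lt
      ⟨hvN, hroot, fun hl => hleaf ((isLeaf_addLeaf_iff hur hw hx hwx hvN).mpr hl)⟩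
    exact ⟨c, by simp [hc, hvu], by rwa [hs _ hvN, hs _ (N.mem_of_arc_right hc)]⟩
  · have hvN := mem_of_isRet_addLeaf hur hw hx hwx hv
    by_cases hvr : v = r
    · subst hvr
      rintro ⟨hav, hbv⟩
      rw [addLeaf_arc_right] at ha hb
      rcases ha with ⟨ha, -⟩ | rfl
      · exact hin.2 a ha (by rwa [hs _ (N.mem_of_arc_left ha), hs _ hvN] at hav)
      rcases hb with ⟨hb, -⟩ | rfl
      · exact hin.2 b hb (by rwa [hs _ (N.mem_of_arc_left hb), hs _ hvN] at hbv)
      exact hab rfl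
    · rw [addLeaf_arc_of_ne hur hw hx hwx hvN hvr] at ha hb
      rw [hs _ (N.mem_of_arc_left ha), hs _ (N.mem_of_arc_left hb), hs _ hvN]
      exact ht.not_eq_and_eq ((isRet_addLeaf_iff hur hw hx hwx hvN).mp hv) ha hb hab

lemma inret_addLeaf_iff (hin : Inret N t r) :
    Inret (addLeaf hur hw hx hwx) (addLeafLabel t r w x) v ↔ Inret N t v ∧ v ≠ r := by
  have hs : ∀ v ∈ N.verts, addLeafLabel t r w x v = t v := fun v hv =>
    addLeafLabel_of_mem hw hx hv
  constructor
  · rintro ⟨hvA, hpar⟩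
    have hvN := mem_of_isRet_addLeaf hur hw hx hwx hvA
    have hvr : v ≠ r := by
      rintro rfl
      exact hpar w (by simp) (by rw [addLeafLabel_w hwx, hs _ hvN])
    refine ⟨⟨(isRet_addLeaf_iff hur hw hx hwx hvN).mp hvA, fun a ha => ?_⟩, hvr⟩
    have := hpar a ((addLeaf_arc_of_ne hur hw hx hwx hvN hvr).mpr ha)
    rwa [hs _ (N.mem_of_arc_left ha), hs _ hvN] at this
  · rintro ⟨⟨hv, hpar⟩, hvr⟩
    refine ⟨(isRet_addLeaf_iff hur hw hx hwx hv.1).mpr hv, fun a ha => ?_⟩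
    rw [addLeaf_arc_of_ne hur hw hx hwx hv.1 hvr] at ha
    rw [hs _ (N.mem_of_arc_left ha), hs _ hv.1]
    exact hpar a ha

lemma inretCount_addLeaf (hin : Inret N t r) :
    inretCount (addLeaf hur hw hx hwx) (addLeafLabel t r w x) + 1 = inretCount N t := by
  have : {v | Inret (addLeaf hur hw hx hwx) (addLeafLabel t r w x) v} =
      {v | Inret N t v} \ {r} := by
    ext v
    exact inret_addLeaf_iff hur hw hx hwx hin
  rw [inretCount, inretCount, this]
  exact Set.ncard_sdiff_singleton_add_one (s := {v | Inret N t v}) hin (finite_setOf_inret N t)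

end Label

end LeafAddition

section Reachable

variable {step : Network → Network → Prop} {N N' : Network} {k : ℕ} {P Q : Network → Prop}

lemma ReachableBy.cons (h : step N N') (hk : ReachableBy step N' k P) :
    ReachableBy step N (k + 1) P := by
  obtain ⟨M, hM0, hM, hP⟩ := hk
  refine ⟨fun i => Nat.casesOn i N M, rfl, fun i hi => ?_, hP⟩
  cases i with
  | zero => exact (hM0 ▸ h : step N (M 0))
  | succ i => exact hM i (by omega)

lemma ReachableBy.mono (h : ReachableBy step N k P) (hPQ : ∀ M, P M → Q M) :
    ReachableBy step N k Q :=
  let ⟨M, hM0, hM, hP⟩ := h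
  ⟨M, hM0, hM, hPQ _ hP⟩

end Reachable

lemma IsNonTemporal.isHGTConsistent_of_inretCount_eq_zero {N : Network} {t : ℕ → ℝ}
    (ht : IsNonTemporal N t) (h : inretCount N t = 0) : IsHGTConsistent N t := by
  have hno : ∀ r, ¬ Inret N t r := fun r hr => by
    rw [inretCount, Set.ncard_eq_zero (finite_setOf_inret N t)] at h
    exact h.subset hr
  refine ⟨ht, fun r hr => ?_⟩
  obtain ⟨u, hu, hut⟩ : ∃ u, N.arc u r = true ∧ t u = t r := by
    simpa [Inret, hr] using hno r
  exact ⟨u, ⟨hu, hut⟩, fun v ⟨hv, hvt⟩ => by_contra fun hvu =>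
    ht.not_eq_and_eq hr hv hu hvu ⟨hvt, hut⟩⟩

theorem reachableBy_isHGTConsistent {N : Network} {t : ℕ → ℝ} (ht : IsNonTemporal N t) :
    ReachableBy IsLeafAddition N (inretCount N t) fun M =>
      ∃ t' : ℕ → ℝ, IsHGTConsistent M t' ∧ ∀ v ∈ N.verts, t' v = t v := by
  induction hk : inretCount N t generalizing N t with
  | zero =>
    exact ⟨fun _ => N, rfl, fun i hi => absurd hi i.not_lt_zero, t,
      ht.isHGTConsistent_of_inretCount_eq_zero hk, fun _ _ => rfl⟩
  | succ k ih =>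
    obtain ⟨r, hr⟩ : ∃ r, Inret N t r :=
      Set.nonempty_of_ncard_ne_zero (hk.trans_ne k.succ_ne_zero)
    obtain ⟨u, hur⟩ := N.exists_parent hr.1.1 hr.1.ne_root
    obtain ⟨w, hw⟩ := Infinite.exists_notMem_finset N.verts
    obtain ⟨x, hx⟩ := Infinite.exists_notMem_finset (insert w N.verts)
    rw [mem_insert, not_or] at hx
    have hwx : w ≠ x := Ne.symm hx.1
    have hcount := inretCount_addLeaf hur hw hx.2 hwx hr
    refine .cons ⟨u, r, addLeaf_isLeafAdditionOn hur hw hx.2 hwx⟩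
      ((ih (isNonTemporal_addLeaf hur hw hx.2 hwx ht hr) (by omega)).mono ?_)
    rintro M ⟨t', hM, ht'⟩
    exact ⟨t', hM, fun v hv => (ht' v (by simp [hv])).trans (addLeafLabel_of_mem hw hx.2 hv)⟩

theorem IsHGTConsistent.of_reduction {N N' : Network} {t : ℕ → ℝ} (ht : IsHGTConsistent N t)
    (hroot : N'.root = N.root) (hV : N'.verts ⊆ N.verts)
    (hin : ∀ v ∈ N'.verts, inDeg N' v = inDeg N v)
    (hout : ∀ v ∈ N'.verts, outDeg N' v = outDeg N v)
    (hnew : ∀ a b, N'.arc a b = true → N.arc a b = true ∨ t a < t b ∧ IsLeaf N b)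
    (hkeep : ∀ a b, N.arc a b = true → a ∈ N'.verts → b ∈ N'.verts → N'.arc a b = true)
    (hlost : ∀ v ∈ N'.verts, ∀ c ∉ N'.verts, N.arc v c = true →
      ∃ c', N'.arc v c' = true ∧ t c ≤ t c')
    (hparent : ∀ u v, N.arc u v = true → IsRet N v → v ∈ N'.verts → u ∈ N'.verts) :
    IsHGTConsistent N' t := by
  have hret {v : ℕ} (hv : v ∈ N'.verts) : IsRet N' v ↔ IsRet N v :=
    isRet_iff_of_inDeg_eq (hV hv) hv (hin v hv)
  have hleaf {v : ℕ} (hv : v ∈ N'.verts) : IsLeaf N' v ↔ IsLeaf N v :=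
    isLeaf_iff_of_deg_eq (hV hv) hv (hin v hv) (hout v hv)
  have hpar {a v : ℕ} (hv : IsRet N' v) (ha : N'.arc a v = true) : N.arc a v = true :=
    (hnew a v ha).resolve_right fun h => ((hret hv.1).mp hv).not_isLeaf h.2
  refine ⟨⟨fun a b hab => ?_, fun a b hab heq => ?_, fun v hv => ?_,
    fun v a b hv ha hb hab => ht.1.not_eq_and_eq ((hret hv.1).mp hv) (hpar hv ha) (hpar hv hb) hab⟩,
    fun v hv => ?_⟩
  · rcases hnew a b hab with h | h
    exacts [ht.1.le h, h.1.le]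
  · rcases hnew a b hab with h | h
    · exact (hret (N'.mem_of_arc_right hab)).mpr (ht.1.isRet_of_eq h heq)
    · exact absurd heq h.1.ne
  · obtain ⟨hvN', hroot', hleaf'⟩ := hv
    obtain ⟨c, hc, hlt⟩ :=
      ht.1.exists_lt ⟨hV hvN', hroot ▸ hroot', fun h => hleaf' ((hleaf hvN').mpr h)⟩
    by_cases hcN' : c ∈ N'.verts
    · exact ⟨c, hkeep v c hc hvN' hcN', hlt⟩
    · obtain ⟨c', hc', hle⟩ := hlost v hvN' c hcN' hc
      exact ⟨c', hc', hlt.trans_le hle⟩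
  · have hvN := (hret hv.1).mp hv
    obtain ⟨u, ⟨hu, hut⟩, huniq⟩ := ht.2 v hvN
    exact ⟨u, ⟨hkeep u v hu (hparent u v hu hvN hv.1) hv.1, hut⟩,
      fun a ha => huniq a ⟨hpar hv ha.1, ha.2⟩⟩

structure IsCherry (N : Network) (x y p q : ℕ) : Prop where
  leaf_x : IsLeaf N x
  leaf_y : IsLeaf N y
  x_ne_y : x ≠ y
  arc_px : N.arc p x = true
  arc_py : N.arc p y = true
  arc_qp : N.arc q p = true

def cherryArc (N : Network) (x y p q a b : ℕ) : Bool :=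
  decide ((N.arc a b = true ∧ a ≠ p ∧ b ≠ p ∧ b ≠ x) ∨ (a = q ∧ b = y))

@[simp] lemma cherryArc_eq_true {N : Network} {x y p q a b : ℕ} :
    cherryArc N x y p q a b = true ↔
      (N.arc a b = true ∧ a ≠ p ∧ b ≠ p ∧ b ≠ x) ∨ (a = q ∧ b = y) :=
  decide_eq_true_iff

namespace IsCherry

variable {N : Network} {x y p q : ℕ} (hc : IsCherry N x y p q)
include hc

lemma isTreeVert : IsTreeVert N p :=
  isTreeVert_of_two_children hc.arc_qp hc.arc_px hc.arc_py hc.x_ne_y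

lemma eq_of_arc_from_p (c : ℕ) (h : N.arc p c = true) : c = x ∨ c = y :=
  eq_or_eq_of_outDeg_eq_two hc.isTreeVert.2.2 hc.arc_px hc.arc_py hc.x_ne_y h

lemma eq_of_arc_to_p (a : ℕ) (h : N.arc a p = true) : a = q :=
  eq_of_inDeg_eq_one hc.isTreeVert.2.1 h hc.arc_qp

lemma eq_of_arc_to_leaf (a : ℕ) (h : N.arc a x = true ∨ N.arc a y = true) : a = p := by
  rcases h with h | h
  exacts [eq_of_inDeg_eq_one hc.leaf_x.2.1 h hc.arc_px,
    eq_of_inDeg_eq_one hc.leaf_y.2.1 h hc.arc_py]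

lemma card_filter_in {v : ℕ} (hv : v ∈ (N.verts.erase x).erase p) :
    #(((N.verts.erase x).erase p).filter fun a => cherryArc N x y p q a v = true) =
      inDeg N v := by
  have := N.arc_mem q p hc.arc_qp
  have := hc.arc_qp
  have := hc.eq_of_arc_from_p
  have := hc.eq_of_arc_to_leaf
  have := hc.leaf_x.not_arc
  by_cases hvy : v = y
  · subst hvy
    rw [hc.leaf_y.2.1, card_eq_one]
    refine ⟨q, ?_⟩
    ext a
    simp only [mem_filter, mem_erase, mem_singleton, cherryArc_eq_true]
    grind
  · congr 1
    ext a
    simp only [mem_filter, mem_erase, cherryArc_eq_true]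
    grind

lemma card_filter_out {v : ℕ} (hv : v ∈ (N.verts.erase x).erase p) :
    #(((N.verts.erase x).erase p).filter fun b => cherryArc N x y p q v b = true) =
      outDeg N v := by
  have := hc.arc_qp
  have := hc.leaf_y.1
  have := hc.eq_of_arc_to_p
  have := hc.eq_of_arc_to_leaf
  have := hc.x_ne_y
  by_cases hvq : v = q
  · subst hvq
    rw [outDeg, ← card_insert_erase (s := N.verts.filter _) (mem_filter.mpr
      ⟨N.mem_of_arc_right hc.arc_qp, hc.arc_qp⟩) (b := y) (by simp only [mem_filter]; grind)]
    congr 1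
    ext a
    simp only [mem_filter, mem_insert, mem_erase, cherryArc_eq_true]
    grind
  · congr 1
    ext a
    simp only [mem_filter, mem_erase, cherryArc_eq_true]
    grind

lemma cherryArc_acyclic (v : ℕ) : ¬ TransGen (fun a b => cherryArc N x y p q a b = true) v v :=
  fun h => N.acyclic v <| TransGen.closed (fun a b hab => by
    rcases cherryArc_eq_true.mp hab with ⟨hab, -⟩ | ⟨rfl, rfl⟩
    exacts [.single hab, .head hc.arc_qp (.single hc.arc_py)]) v v h

def reduce : Network :=
  N.ofDegEq ((N.verts.erase x).erase p) (cherryArc N x y p q)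
    (by
      have := hc.leaf_x.ne_root
      have := N.ne_root_of_arc hc.arc_qp
      simp only [mem_erase]
      grind [N.root_mem])
    (fun a b hab => by
      have := N.arc_mem
      have := hc.arc_qp
      have := hc.leaf_y.1
      have := hc.leaf_x.not_arc
      have := N.ne_of_arc hc.arc_qp
      have := N.ne_of_arc hc.arc_py
      have := hc.x_ne_y
      simp only [cherryArc_eq_true] at hab
      simp only [mem_erase]
      grind)
    hc.cherryArc_acyclic (fun _ hv _ => hc.card_filter_in hv) (fun _ hv _ => hc.card_filter_out hv)
    (fun _ hv hvN => absurd (mem_of_mem_erase (mem_of_mem_erase hv)) hvN)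

lemma reducesCherry : ReducesCherry N hc.reduce x y :=
  ⟨p, q, hc.leaf_x, hc.leaf_y, hc.x_ne_y, hc.arc_px, hc.arc_py, hc.arc_qp, rfl, rfl,
    fun _ _ => cherryArc_eq_true⟩

@[simp] lemma reduce_verts : hc.reduce.verts = (N.verts.erase x).erase p := rfl

@[simp] lemma reduce_arc {a b : ℕ} : hc.reduce.arc a b = true ↔
    (N.arc a b = true ∧ a ≠ p ∧ b ≠ p ∧ b ≠ x) ∨ (a = q ∧ b = y) :=
  cherryArc_eq_true

lemma card_reduce : #hc.reduce.verts + 2 = #N.verts := by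
  rw [reduce_verts, ← card_erase_add_one hc.leaf_x.1, ← card_erase_add_one (mem_erase.mpr
    ⟨N.ne_of_arc hc.arc_px, N.mem_of_arc_left hc.arc_px⟩)]

lemma isHGTConsistent_reduce {t : ℕ → ℝ} (ht : IsHGTConsistent N t) :
    IsHGTConsistent hc.reduce t := by
  have hqp := ht.1.lt_of_not_isRet hc.arc_qp hc.isTreeVert.not_isRet
  have hpy := ht.1.le hc.arc_py
  refine ht.of_reduction rfl (fun v hv => mem_of_mem_erase (mem_of_mem_erase hv))
    (fun v hv => hc.card_filter_in hv) (fun v hv => hc.card_filter_out hv)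
    (fun a b hab => ?_) (fun a b hab ha hb => ?_) (fun v hv c hc' hvc => ?_)
    (fun u v huv hv hvN' => ?_)
  · rcases hc.reduce_arc.mp hab with ⟨hab, -⟩ | ⟨rfl, rfl⟩
    exacts [.inl hab, .inr ⟨hqp.trans_le hpy, hc.leaf_y⟩]
  · simp only [reduce_verts, mem_erase] at ha hb
    exact hc.reduce_arc.mpr (.inl ⟨hab, ha.1, hb.1, hb.2.1⟩)
  · have hcN := N.mem_of_arc_right hvc
    simp only [reduce_verts, mem_erase, hcN, and_true, not_and_or, not_not] at hv hc'
    rcases hc' with rfl | rfl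
    · exact ⟨y, hc.reduce_arc.mpr (.inr ⟨hc.eq_of_arc_to_p v hvc, rfl⟩), hpy⟩
    · exact absurd (hc.eq_of_arc_to_leaf v (.inl hvc)) hv.1
  · have hvN := N.mem_of_arc_right huv
    simp only [reduce_verts, mem_erase] at hvN' ⊢
    refine ⟨fun hup => ?_, fun hux => hc.leaf_x.not_arc v (hux ▸ huv), N.mem_of_arc_left huv⟩
    rcases hc.eq_of_arc_from_p v (hup ▸ huv) with rfl | rfl
    exacts [hv.not_isLeaf hc.leaf_x, hv.not_isLeaf hc.leaf_y]

end IsCherry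

structure IsRetCherry (N : Network) (x y px py z q : ℕ) : Prop where
  leaf_x : IsLeaf N x
  leaf_y : IsLeaf N y
  isRet_px : IsRet N px
  arc_px_x : N.arc px x = true
  arc_py_px : N.arc py px = true
  arc_py_y : N.arc py y = true
  arc_z_px : N.arc z px = true
  z_ne_py : z ≠ py
  arc_q_py : N.arc q py = true

def retCherryArc (N : Network) (x y px py z q a b : ℕ) : Bool :=
  decide ((N.arc a b = true ∧ a ≠ px ∧ a ≠ py ∧ b ≠ px ∧ b ≠ py) ∨ (a = z ∧ b = x) ∨
    (a = q ∧ b = y))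

@[simp] lemma retCherryArc_eq_true {N : Network} {x y px py z q a b : ℕ} :
    retCherryArc N x y px py z q a b = true ↔
      (N.arc a b = true ∧ a ≠ px ∧ a ≠ py ∧ b ≠ px ∧ b ≠ py) ∨ (a = z ∧ b = x) ∨
        (a = q ∧ b = y) :=
  decide_eq_true_iff

namespace IsRetCherry

variable {N : Network} {x y px py z q : ℕ} (hc : IsRetCherry N x y px py z q)
include hc

lemma isTreeVert : IsTreeVert N py :=
  isTreeVert_of_two_children hc.arc_q_py hc.arc_py_px hc.arc_py_y fun h =>
    hc.isRet_px.not_isLeaf (h ▸ hc.leaf_y)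

lemma eq_of_arc_from_py (c : ℕ) (h : N.arc py c = true) : c = px ∨ c = y :=
  eq_or_eq_of_outDeg_eq_two hc.isTreeVert.2.2 hc.arc_py_px hc.arc_py_y
    (fun h => hc.isRet_px.not_isLeaf (h ▸ hc.leaf_y)) h

lemma eq_of_arc_from_px (c : ℕ) (h : N.arc px c = true) : c = x :=
  eq_of_outDeg_eq_one hc.isRet_px.outDeg_eq_one h hc.arc_px_x

lemma eq_of_arc_to_py (a : ℕ) (h : N.arc a py = true) : a = q :=
  eq_of_inDeg_eq_one hc.isTreeVert.2.1 h hc.arc_q_py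

lemma eq_of_arc_to_px (a : ℕ) (h : N.arc a px = true) : a = py ∨ a = z :=
  eq_or_eq_of_inDeg_eq_two hc.isRet_px.2 hc.arc_py_px hc.arc_z_px hc.z_ne_py.symm h

lemma eq_of_arc_to_leaf (a : ℕ) : (N.arc a x = true → a = px) ∧ (N.arc a y = true → a = py) :=
  ⟨fun h => eq_of_inDeg_eq_one hc.leaf_x.2.1 h hc.arc_px_x,
    fun h => eq_of_inDeg_eq_one hc.leaf_y.2.1 h hc.arc_py_y⟩

lemma x_ne_y : x ≠ y := fun h =>
  N.ne_of_arc hc.arc_py_px (eq_of_inDeg_eq_one hc.leaf_y.2.1 hc.arc_py_y (h ▸ hc.arc_px_x))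

lemma card_filter_in {v : ℕ} (hv : v ∈ (N.verts.erase px).erase py) :
    #(((N.verts.erase px).erase py).filter fun a => retCherryArc N x y px py z q a v = true) =
      inDeg N v := by
  have := N.arc_mem
  have := hc.arc_z_px
  have := hc.arc_q_py
  have := hc.arc_py_px
  have := hc.z_ne_py
  have := hc.eq_of_arc_from_py
  have := hc.eq_of_arc_from_px
  have := hc.eq_of_arc_to_leaf
  have := hc.leaf_x.not_arc
  have := hc.x_ne_y
  by_cases hvx : v = x
  · subst hvx
    rw [hc.leaf_x.2.1, card_eq_one]
    refine ⟨z, ?_⟩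
    ext a
    simp only [mem_filter, mem_erase, mem_singleton, retCherryArc_eq_true]
    grind
  by_cases hvy : v = y
  · subst hvy
    rw [hc.leaf_y.2.1, card_eq_one]
    refine ⟨q, ?_⟩
    ext a
    simp only [mem_filter, mem_erase, mem_singleton, retCherryArc_eq_true]
    grind
  · congr 1
    ext a
    simp only [mem_filter, mem_erase, retCherryArc_eq_true]
    grind

lemma card_filter_out {v : ℕ} (hv : v ∈ (N.verts.erase px).erase py) :
    #(((N.verts.erase px).erase py).filter fun b => retCherryArc N x y px py z q v b = true) =
      outDeg N v := by
  have := hc.arc_py_y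
  have := hc.z_ne_py
  have := hc.eq_of_arc_to_px
  have := hc.eq_of_arc_to_py
  have := hc.eq_of_arc_to_leaf
  have := hc.leaf_x.not_arc
  have := hc.leaf_x.1
  have := hc.leaf_y.1
  have hx : x ∉ N.verts.filter fun b => N.arc v b = true := by simp only [mem_filter]; grind
  have hy : y ∉ N.verts.filter fun b => N.arc v b = true := by simp only [mem_filter]; grind
  have hzpx : px ∈ N.verts.filter fun b => N.arc z b = true :=
    mem_filter.mpr ⟨N.mem_of_arc_right hc.arc_z_px, hc.arc_z_px⟩
  have hqpy : py ∈ N.verts.filter fun b => N.arc q b = true :=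
    mem_filter.mpr ⟨N.mem_of_arc_right hc.arc_q_py, hc.arc_q_py⟩
  rw [outDeg]
  by_cases hvz : v = z <;> by_cases hvq : v = q
  · subst hvz hvq
    rw [← card_insert_erase hqpy hy, ← card_insert_erase (b := x)
      (mem_insert_of_mem (mem_erase.mpr ⟨(N.ne_of_arc hc.arc_py_px).symm, hzpx⟩))
      (by simp only [mem_insert, mem_erase, not_or]; exact ⟨hc.x_ne_y, fun h => hx h.2⟩)]
    congr 1
    ext a
    simp only [mem_filter, mem_insert, mem_erase, retCherryArc_eq_true]
    grind
  · subst hvz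
    rw [← card_insert_erase hzpx hx]
    congr 1
    ext a
    simp only [mem_filter, mem_insert, mem_erase, retCherryArc_eq_true]
    grind
  · subst hvq
    rw [← card_insert_erase hqpy hy]
    congr 1
    ext a
    simp only [mem_filter, mem_insert, mem_erase, retCherryArc_eq_true]
    grind
  · congr 1
    ext a
    simp only [mem_filter, mem_erase, retCherryArc_eq_true]
    grind

lemma retCherryArc_acyclic (v : ℕ) :
    ¬ TransGen (fun a b => retCherryArc N x y px py z q a b = true) v v :=
  fun h => N.acyclic v <| TransGen.closed (fun a b hab => by
    rcases retCherryArc_eq_true.mp hab with ⟨hab, -⟩ | ⟨rfl, rfl⟩ | ⟨rfl, rfl⟩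
    exacts [.single hab, .head hc.arc_z_px (.single hc.arc_px_x),
      .head hc.arc_q_py (.single hc.arc_py_y)]) v v h

def reduce : Network :=
  N.ofDegEq ((N.verts.erase px).erase py) (retCherryArc N x y px py z q)
    (by
      have := hc.isRet_px.ne_root
      have := N.ne_root_of_arc hc.arc_q_py
      simp only [mem_erase]
      grind [N.root_mem])
    (fun a b hab => by
      have := N.arc_mem
      have := hc.arc_z_px
      have := hc.arc_q_py
      have := hc.arc_py_px
      have := hc.arc_px_x
      have := hc.z_ne_py
      have := hc.eq_of_arc_from_px
      have := hc.leaf_y.1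
      have := hc.leaf_x.not_arc
      have := hc.leaf_y.not_arc
      have := N.ne_of_arc hc.arc_q_py
      simp only [retCherryArc_eq_true] at hab
      simp only [mem_erase]
      grind)
    hc.retCherryArc_acyclic (fun _ hv _ => hc.card_filter_in hv)
    (fun _ hv _ => hc.card_filter_out hv)
    (fun _ hv hvN => absurd (mem_of_mem_erase (mem_of_mem_erase hv)) hvN)

@[simp] lemma reduce_verts : hc.reduce.verts = (N.verts.erase px).erase py := rfl

@[simp] lemma reduce_arc {a b : ℕ} : hc.reduce.arc a b = true ↔
    (N.arc a b = true ∧ a ≠ px ∧ a ≠ py ∧ b ≠ px ∧ b ≠ py) ∨ (a = z ∧ b = x) ∨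
      (a = q ∧ b = y) :=
  retCherryArc_eq_true

lemma reducesRetCherry : ReducesRetCherry N hc.reduce x y :=
  ⟨px, py, z, q, hc.leaf_x, hc.leaf_y, hc.isRet_px, hc.arc_px_x, hc.arc_py_px, hc.arc_py_y,
    hc.arc_z_px, hc.z_ne_py, hc.arc_q_py, rfl, rfl, fun _ _ => retCherryArc_eq_true⟩

lemma card_reduce : #hc.reduce.verts + 2 = #N.verts := by
  rw [reduce_verts, ← card_erase_add_one hc.isRet_px.1, ← card_erase_add_one (mem_erase.mpr
    ⟨N.ne_of_arc hc.arc_py_px, N.mem_of_arc_left hc.arc_py_px⟩)]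

lemma isHGTConsistent_reduce {t : ℕ → ℝ} (ht : IsHGTConsistent N t) :
    IsHGTConsistent hc.reduce t := by
  have hpxx := ht.1.lt_of_not_isRet hc.arc_px_x hc.leaf_x.not_isRet
  have hqpy := ht.1.lt_of_not_isRet hc.arc_q_py hc.isTreeVert.not_isRet
  have hpyy := ht.1.le hc.arc_py_y
  have hzpx := ht.1.le hc.arc_z_px
  refine ht.of_reduction rfl (fun v hv => mem_of_mem_erase (mem_of_mem_erase hv))
    (fun v hv => hc.card_filter_in hv) (fun v hv => hc.card_filter_out hv)
    (fun a b hab => ?_) (fun a b hab ha hb => ?_) (fun v hv c hc' hvc => ?_)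
    (fun u v huv hv hvN' => ?_)
  · rcases hc.reduce_arc.mp hab with ⟨hab, -⟩ | ⟨rfl, rfl⟩ | ⟨rfl, rfl⟩
    exacts [.inl hab, .inr ⟨hzpx.trans_lt hpxx, hc.leaf_x⟩, .inr ⟨hqpy.trans_le hpyy, hc.leaf_y⟩]
  · simp only [reduce_verts, mem_erase] at ha hb
    exact hc.reduce_arc.mpr (.inl ⟨hab, ha.2.1, ha.1, hb.2.1, hb.1⟩)
  · have hcN := N.mem_of_arc_right hvc
    simp only [reduce_verts, mem_erase, hcN, and_true, not_and_or, not_not] at hv hc'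
    rcases hc' with rfl | rfl
    · exact ⟨y, hc.reduce_arc.mpr (.inr (.inr ⟨hc.eq_of_arc_to_py v hvc, rfl⟩)), hpyy⟩
    · refine ⟨x, hc.reduce_arc.mpr (.inr (.inl ⟨?_, rfl⟩)), hpxx.le⟩
      exact (hc.eq_of_arc_to_px v hvc).resolve_left hv.1
  · have hvN := N.mem_of_arc_right huv
    simp only [reduce_verts, mem_erase] at hvN' ⊢
    refine ⟨fun hup => ?_, fun hupx => ?_, N.mem_of_arc_left huv⟩
    · rcases hc.eq_of_arc_from_py v (hup ▸ huv) with rfl | rfl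
      exacts [hvN'.2.1 rfl, hv.not_isLeaf hc.leaf_y]
    · exact hv.not_isLeaf (hc.eq_of_arc_from_px v (hupx ▸ huv) ▸ hc.leaf_x)

end IsRetCherry

section Orchard

variable {N : Network} {t : ℕ → ℝ}

lemma isSingleLeaf_of_card_lt_three (h : #N.verts < 3) : IsSingleLeaf N := by
  obtain ⟨c, hc⟩ := N.exists_child N.root_mem fun h => h.ne_root rfl
  have hsub : {N.root, c} ⊆ N.verts :=
    insert_subset N.root_mem (singleton_subset_iff.mpr (N.mem_of_arc_right hc))
  refine ⟨c, (N.ne_of_arc hc).symm, (eq_of_subset_of_card_le hsub ?_).symm⟩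
  rw [card_pair (N.ne_of_arc hc)]
  omega

lemma verts_subset_of_isLeaf {c : ℕ} (hc : N.arc N.root c = true) (hcl : IsLeaf N c) :
    N.verts ⊆ {N.root, c} := fun v hv => by
  have hreach := N.reflTransGen_root hv
  clear hv
  induction hreach with
  | refl => exact mem_insert_self _ _
  | tail _ hbd ih =>
    rcases mem_insert.mp ih with rfl | hb
    · exact mem_insert_of_mem (mem_singleton.mpr (eq_of_outDeg_eq_one N.root_outdeg hbd hc))
    · exact absurd (mem_singleton.mp hb ▸ hbd) (hcl.not_arc _)

/-- Otherwise the child of the root would be a reticulation with two horizontal in-arcs. -/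
lemma root_lt_of_isMax (ht : IsHGTConsistent N t) (h3 : 3 ≤ #N.verts) {m : ℕ}
    (hmax : ∀ v ∈ N.verts, ¬ IsLeaf N v → t v ≤ t m) : t N.root < t m := by
  refine lt_of_not_ge fun hm => ?_
  obtain ⟨c, hc⟩ := N.exists_child N.root_mem fun h => h.ne_root rfl
  by_cases hcl : IsLeaf N c
  · have := card_le_card (verts_subset_of_isLeaf hc hcl)
    have := card_le_two (a := N.root) (b := c)
    omega
  have hct : t N.root = t c :=
    le_antisymm (ht.1.le hc) ((hmax c (N.mem_of_arc_right hc) hcl).trans hm)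
  have hcr := ht.1.isRet_of_eq hc hct
  obtain ⟨p, hpr, hp⟩ := hcr.exists_parent_ne N.root
  have hpt : t p = t c := le_antisymm (ht.1.le hp) (hct ▸ ht.1.root_le (N.mem_of_arc_left hp))
  exact ht.1.not_eq_and_eq hcr hc hp hpr.symm ⟨hct, hpt⟩

/-- A maximum at a reticulation is shared by its horizontal parent, which is a tree vertex. -/
lemma exists_isTreeVert_isMax (ht : IsHGTConsistent N t) (h3 : 3 ≤ #N.verts) :
    ∃ u, IsTreeVert N u ∧ ∀ v ∈ N.verts, ¬ IsLeaf N v → t v ≤ t u := by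
  classical
  obtain ⟨m, hm, hmax⟩ := (N.verts.filter fun v => ¬ IsLeaf N v).exists_max_image t
    ⟨N.root, mem_filter.mpr ⟨N.root_mem, fun h => h.ne_root rfl⟩⟩
  replace hmax : ∀ v ∈ N.verts, ¬ IsLeaf N v → t v ≤ t m := fun v hv hl =>
    hmax v (mem_filter.mpr ⟨hv, hl⟩)
  obtain ⟨hmN, hml⟩ := mem_filter.mp hm
  have hroot := root_lt_of_isMax ht h3 hmax
  rcases N.isTreeVert_or_isRet_or_isLeaf hmN (fun h => hroot.ne (h ▸ rfl)) with hmt | hmr | hml'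
  · exact ⟨m, hmt, hmax⟩
  · obtain ⟨p, ⟨hp, hpt⟩, -⟩ := ht.2 m hmr
    refine ⟨p, ?_, fun v hv hl => hpt ▸ hmax v hv hl⟩
    have hpr : p ≠ N.root := fun h => hroot.ne (h ▸ hpt)
    rcases N.isTreeVert_or_isRet_or_isLeaf (N.mem_of_arc_left hp) hpr with hpt' | hpr' | hpl
    · exact hpt'
    · obtain ⟨c, hc, hlt⟩ := ht.1.exists_lt hpr'.isInternal
      rw [eq_of_outDeg_eq_one hpr'.outDeg_eq_one hc hp, hpt] at hlt
      exact absurd hlt (lt_irrefl _)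
    · exact absurd hpl (not_isLeaf_of_arc hp)
  · exact absurd hml' hml

lemma isCherry_or_isRetCherry (ht : IsNonTemporal N t) {u : ℕ} (hu : IsTreeVert N u)
    (hmax : ∀ v ∈ N.verts, ¬ IsLeaf N v → t v ≤ t u) :
    (∃ x y p q, IsCherry N x y p q) ∨ ∃ x y px py z q, IsRetCherry N x y px py z q := by
  have hleaf {a b : ℕ} (hab : N.arc a b = true) (hlt : t u < t b) : IsLeaf N b :=
    by_contra fun hb => (hmax b (N.mem_of_arc_right hab) hb).not_gt hlt
  obtain ⟨q, hq⟩ := N.exists_parent hu.1 hu.isInternal.2.1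
  obtain ⟨y, hy, hlt⟩ := ht.exists_lt hu.isInternal
  obtain ⟨o, ho, hoy⟩ := exists_mem_ne (hu.2.2.symm ▸ one_lt_two : 1 < outDeg N u) y
  replace ho := (mem_filter.mp ho).2
  by_cases hol : IsLeaf N o
  · exact .inl ⟨o, y, u, q, hol, hleaf hy hlt, hoy, ho, hy, hq⟩
  have hto : t u = t o := le_antisymm (ht.le ho) (hmax o (N.mem_of_arc_right ho) hol)
  have hor := ht.isRet_of_eq ho hto
  obtain ⟨d, hd, hlt'⟩ := ht.exists_lt hor.isInternal
  obtain ⟨z, hzu, hz⟩ := hor.exists_parent_ne u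
  exact .inr ⟨d, y, o, u, z, q, hleaf hd (hto ▸ hlt'), hleaf hy hlt, hor, hd, ho, hy, hz, hzu, hq⟩

lemma exists_cherryStep (ht : IsHGTConsistent N t) (h3 : 3 ≤ #N.verts) :
    ∃ N', CherryStep N N' ∧ IsHGTConsistent N' t ∧ #N'.verts + 2 = #N.verts := by
  obtain ⟨u, hu, hmax⟩ := exists_isTreeVert_isMax ht h3
  rcases isCherry_or_isRetCherry ht.1 hu hmax with ⟨x, y, _, _, hc⟩ | ⟨x, y, _, _, _, _, hc⟩
  · exact ⟨hc.reduce, ⟨x, y, .inl hc.reducesCherry⟩, hc.isHGTConsistent_reduce ht, hc.card_reduce⟩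
  · exact ⟨hc.reduce, ⟨x, y, .inr hc.reducesRetCherry⟩, hc.isHGTConsistent_reduce ht,
      hc.card_reduce⟩

theorem IsHGTConsistent.isOrchard (ht : IsHGTConsistent N t) : IsOrchard N := by
  induction hn : #N.verts using Nat.strong_induction_on generalizing N with
  | _ n ih =>
    by_cases h3 : 3 ≤ n
    · obtain ⟨N', hstep, ht', hcard⟩ := exists_cherryStep ht (hn ▸ h3)
      obtain ⟨M, hM, hsingle⟩ := ih _ (by omega) ht' rfl
      exact ⟨M, .head hstep hM, hsingle⟩
    · exact ⟨N, .refl, isSingleLeaf_of_card_lt_three (by omega)⟩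

end Orchard

/-- From a non-temporal labelling with `h` inrets one obtains, by
`h` leaf additions, a network admitting an HGT-consistent labelling extending the
given one; in particular `L_OR(N) ≤ V_OR(N)`. -/
theorem leafAdditions_fix_inrets (N : Network) (t : ℕ → ℝ)
    (ht : IsNonTemporal N t) :
    (∃ M : ℕ → Network, M 0 = N ∧
      (∀ i : ℕ, i < inretCount N t → IsLeafAddition (M i) (M (i + 1))) ∧
      ∃ t' : ℕ → ℝ, IsHGTConsistent (M (inretCount N t)) t' ∧
        ∀ v ∈ N.verts, t' v = t v) ∧
    LOR N ≤ VOR N := by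
  refine ⟨reachableBy_isHGTConsistent ht, Nat.sInf_le ?_⟩
  obtain ⟨t₀, ht₀, hcount⟩ :
      VOR N ∈ {k | ∃ t' : ℕ → ℝ, IsNonTemporal N t' ∧ inretCount N t' = k} :=
    Nat.sInf_mem ⟨_, t, ht, rfl⟩
  rw [← hcount]
  exact (reachableBy_isHGTConsistent ht₀).mono fun M ⟨t', hM, _⟩ => hM.isOrchard

end PhyloNet
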